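/- arXiv:1111.4722 — 3 statements merged into one kernel-verified Lean document; each statement's English description precedes it below -/
import Mathlib

section
/- Let n = 5 and suppose the parameter collection c satisfies, for the pair (i,j) = (1,2): (C1) c_1^{k2} c_2^{l1} ≠ c_2^{k1} c_1^{l2} for all k ≠ l with k,l ∈ {3,4,5}; and (C2) for every p ∈ {3,4,5}, writing {k,l,m} = {1,…,5} \ {1,2,p}, for each I ∈ {1,2} one has c_p^{kI}(c_1^{l2}c_2^{m1} − c_2^{l1}c_1^{m2}) + c_p^{lI}(c_2^{k1}c_1^{m2} − c_1^{k2}c_2^{m1}) + c_p^{mI}(c_1^{k2}c_2^{l1} − c_2^{k1}c_1^{l2}) ≠ 0. Let a = (0, 0, a_3, a_4, a_5) ∈ ℝ^5 be a unit vector with a_3 a_4 a_5 ≠ 0 satisfying Σ_{k=3}^5 c_1^{k2} a_k = 0 and Σ_{k=3}^5 c_2^{k1} a_k = 0. Then there exist T > 0 and a continuous map ξ : (0,T) → ℝ^5 \ {0} with ξ(t) → a as t → 0⁺, such that rank P(ξ(t), tc) ≤ 3 for all t ∈ (0,T), i.e., ξ(t) ∈ Σ_sing(tc). -/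
open Matrix

/-- A parameter collection: `c i k j` denotes `c_i^{kj}`, symmetric in the two
superscripts, with normalizations `c_i^{ii} = 1` and `c_i^{jj} = 0` for `i ≠ j`. -/
def IsParamColl (n : ℕ) (c : Fin n → Fin n → Fin n → ℝ) : Prop :=
  (∀ i j k : Fin n, j ≠ k → c i k j = c i j k) ∧
  (∀ i : Fin n, c i i i = 1) ∧
  (∀ i j : Fin n, i ≠ j → c i j j = 0)

/-- The principal symbol `P(ξ, c) = Σ_k ξ_k A^k`, where `(A^k)_{ij} = c_i^{kj}`. -/
def pSymb {n : ℕ} (ξ : Fin n → ℝ) (c : Fin n → Fin n → Fin n → ℝ) :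
    Matrix (Fin n) (Fin n) ℝ :=
  Matrix.of fun i j => ∑ k, ξ k * c i k j

/-- The scaled parameter collection `t • c` (normalized entries unchanged). -/
def pScale {n : ℕ} (t : ℝ) (c : Fin n → Fin n → Fin n → ℝ) :
    Fin n → Fin n → Fin n → ℝ :=
  fun i k j => if k = j then c i k j else t * c i k j

/-!
Look for `ξ = (t η₁, t η₂, a₃, ζ₄, ζ₅)` together with two kernel vectors of `P(ξ, tc)` of the form
`x = e₁ + t u`, `y = e₂ + t u'`, where `u, u'` live on the last three coordinates. Since
`P(ξ, tc) = diag ξ + t C(ξ)` with `C` built from the parameters `c_i^{kj}`, `k ≠ j`, both `P x` and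
`P y` are divisible by `t`. After dividing, and adding the equation `w₀ = t`, this is a square
system of 11 polynomial equations in `w = (t, η, ζ, u, u')`. At `t = 0` it is solved by a point
above `a`, thanks to the two linear conditions on `a`, and its Jacobian there is invertible: the
block in `(ζ₄, ζ₅)` has determinant (C1) for `(k, l) = (4, 5)`, and the remaining equations are
triangular with diagonal entries `1` and `a₃, a₄, a₅`. The inverse function theorem then produces
a continuous branch of solutions for small `t`.
-/

open Function Filter Topology

theorem HasStrictFDerivAt.exists_local_lift {𝕜 : Type*} [NontriviallyNormedField 𝕜]
    {E : Type*} [NormedAddCommGroup E] [NormedSpace 𝕜 E] [CompleteSpace E]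
    {F : Type*} [NormedAddCommGroup F] [NormedSpace 𝕜 F] {f : E → F} {f' : E ≃L[𝕜] F} {a : E}
    (hf : HasStrictFDerivAt f (f' : E →L[𝕜] F) a) {X : Type*} [TopologicalSpace X]
    {z : X → F} {x₀ : X} (hz : Continuous z) (hz₀ : z x₀ = f a) :
    ∃ γ : X → E, γ x₀ = a ∧ ∀ᶠ x in 𝓝 x₀, ContinuousAt γ x ∧ f (γ x) = z x := by
  set g := hf.localInverse f f' a
  have hg : ∀ᶠ y in 𝓝 (f a), ContinuousAt g y ∧ f (g y) = y := by
    have htarget := (hf.toOpenPartialHomeomorph f).open_target.mem_nhds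
      hf.image_mem_toOpenPartialHomeomorph_target
    filter_upwards [htarget, hf.eventually_right_inverse] with y hy hfy
    exact ⟨(hf.toOpenPartialHomeomorph f).continuousAt_symm hy, hfy⟩
  refine ⟨g ∘ z, by simp [g, hz₀], ?_⟩
  filter_upwards [hz.continuousAt.preimage_mem_nhds (hz₀ ▸ hg)] with x hx
  exact ⟨hx.1.comp hz.continuousAt, hx.2⟩

theorem ContDiffAt.exists_hasStrictFDerivAt_equiv {𝕂 : Type*} [RCLike 𝕂]
    {E : Type*} [NormedAddCommGroup E] [NormedSpace 𝕂 E] [FiniteDimensional 𝕂 E]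
    {F : Type*} [NormedAddCommGroup F] [NormedSpace 𝕂 F] [FiniteDimensional 𝕂 F]
    {f : E → F} {a : E} (hf : ContDiffAt 𝕂 1 f a) (hinj : Injective (fderiv 𝕂 f a))
    (hdim : Module.finrank 𝕂 E = Module.finrank 𝕂 F) :
    ∃ f' : E ≃L[𝕂] F, HasStrictFDerivAt f (f' : E →L[𝕂] F) a :=
  ⟨((fderiv 𝕂 f a : E →ₗ[𝕂] F).linearEquivOfInjective hinj hdim).toContinuousLinearEquiv,
    hf.hasStrictFDerivAt one_ne_zero⟩

theorem fderiv_eval_apply {𝕜 ι : Type*} [NontriviallyNormedField 𝕜] [Fintype ι] (i : ι)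
    (w v : ι → 𝕜) : fderiv 𝕜 (fun w : ι → 𝕜 => w i) w v = v i := by
  rw [(hasFDerivAt_apply i w).fderiv]
  rfl

theorem Matrix.rank_add_two_le_of_mulVec_eq_zero {m n K : Type*} [Fintype m] [Fintype n]
    [Field K] {M : Matrix m n K} {x y : n → K} (hx : M *ᵥ x = 0) (hy : M *ᵥ y = 0)
    (hxy : LinearIndependent K ![x, y]) : M.rank + 2 ≤ Fintype.card n := by
  have hspan : Submodule.span K (Set.range ![x, y]) ≤ LinearMap.ker M.mulVecLin := by
    rw [Submodule.span_le, Set.range_subset_iff]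
    intro i
    fin_cases i <;> simpa
  have hker : 2 ≤ Module.finrank K (LinearMap.ker M.mulVecLin) := by
    simpa [finrank_span_eq_card hxy] using Submodule.finrank_mono hspan
  have := LinearMap.finrank_range_add_finrank_ker M.mulVecLin
  rw [Module.finrank_fintype_fun_eq_card] at this
  rw [Matrix.rank]
  omega

def offDiag {n : ℕ} (c : Fin n → Fin n → Fin n → ℝ) : Fin n → Fin n → Fin n → ℝ :=
  fun i k j => if k = j then 0 else c i k j

theorem pSymb_pScale {n : ℕ} {c : Fin n → Fin n → Fin n → ℝ} (hc : IsParamColl n c)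
    (ξ : Fin n → ℝ) (t : ℝ) :
    pSymb ξ (pScale t c) = diagonal ξ + t • pSymb ξ (offDiag c) := by
  ext i j
  have hsplit : ∀ k, ξ k * pScale t c i k j
      = (if k = j then ξ k * c i k j else 0) + t * (ξ k * offDiag c i k j) := by
    intro k
    by_cases hkj : k = j
    · simp [pScale, offDiag, hkj]
    · simp [pScale, offDiag, hkj]
      ring
  have hdiag : c i j j = if i = j then 1 else 0 := by
    split_ifs with hij
    · exact hij ▸ hc.2.1 i
    · exact hc.2.2 i j hij
  simp only [pSymb, of_apply, hsplit, Finset.sum_add_distrib, Finset.sum_ite_eq',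
    Finset.mem_univ, if_true, ← Finset.mul_sum, hdiag, Matrix.add_apply, Matrix.smul_apply,
    smul_eq_mul, diagonal_apply]
  split_ifs <;> simp_all

theorem pSymb_pScale_mulVec {n : ℕ} {c : Fin n → Fin n → Fin n → ℝ} (hc : IsParamColl n c)
    (ξ x : Fin n → ℝ) (t : ℝ) :
    pSymb ξ (pScale t c) *ᵥ x = ξ * x + t • (pSymb ξ (offDiag c) *ᵥ x) := by
  rw [pSymb_pScale hc, add_mulVec, smul_mulVec]
  congr 1
  ext i
  exact mulVec_diagonal ξ x i

namespace SingularBranch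

variable (c : Fin 5 → Fin 5 → Fin 5 → ℝ) (a : Fin 5 → ℝ)

-- `w = (t, η₁, η₂, ζ₄, ζ₅, u₃, u₄, u₅, u'₃, u'₄, u'₅)` in the paper's 1-based indexing.
def symbol (w : Fin 11 → ℝ) : Fin 5 → ℝ := ![w 0 * w 1, w 0 * w 2, a 2, w 3, w 4]

def kerX (w : Fin 11 → ℝ) : Fin 5 → ℝ := ![1, 0, w 0 * w 5, w 0 * w 6, w 0 * w 7]

def kerY (w : Fin 11 → ℝ) : Fin 5 → ℝ := ![0, 1, w 0 * w 8, w 0 * w 9, w 0 * w 10]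

def resX (w : Fin 11 → ℝ) : Fin 5 → ℝ :=
  ![w 1, 0, a 2 * w 5, w 3 * w 6, w 4 * w 7] + pSymb (symbol a w) (offDiag c) *ᵥ kerX w

def resY (w : Fin 11 → ℝ) : Fin 5 → ℝ :=
  ![0, w 2, a 2 * w 8, w 3 * w 9, w 4 * w 10] + pSymb (symbol a w) (offDiag c) *ᵥ kerY w

def system (w : Fin 11 → ℝ) : ℝ × (Fin 5 → ℝ) × (Fin 5 → ℝ) := (w 0, resX c a w, resY c a w)

variable {c}

theorem pSymb_mulVec_kerX (hc : IsParamColl 5 c) (w : Fin 11 → ℝ) :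
    pSymb (symbol a w) (pScale (w 0) c) *ᵥ kerX w = w 0 • resX c a w := by
  rw [pSymb_pScale_mulVec hc, resX, smul_add]
  congr 1
  ext i
  fin_cases i <;> simp [symbol, kerX] <;> ring

theorem pSymb_mulVec_kerY (hc : IsParamColl 5 c) (w : Fin 11 → ℝ) :
    pSymb (symbol a w) (pScale (w 0) c) *ᵥ kerY w = w 0 • resY c a w := by
  rw [pSymb_pScale_mulVec hc, resY, smul_add]
  congr 1
  ext i
  fin_cases i <;> simp [symbol, kerY] <;> ring

theorem linearIndependent_kerX_kerY (w : Fin 11 → ℝ) :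
    LinearIndependent ℝ ![kerX w, kerY w] := by
  rw [LinearIndependent.pair_iff]
  intro s t hst
  have h0 := congrFun hst 0
  have h1 := congrFun hst 1
  simp [kerX, kerY] at h0 h1
  exact ⟨h0, h1⟩

theorem rank_pSymb_le_three (hc : IsParamColl 5 c) {w : Fin 11 → ℝ}
    (hX : resX c a w = 0) (hY : resY c a w = 0) :
    (pSymb (symbol a w) (pScale (w 0) c)).rank ≤ 3 := by
  have := rank_add_two_le_of_mulVec_eq_zero (by rw [pSymb_mulVec_kerX a hc, hX, smul_zero])
    (by rw [pSymb_mulVec_kerY a hc, hY, smul_zero]) (linearIndependent_kerX_kerY w)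
  simpa using this

theorem continuous_symbol : Continuous (symbol a) := by
  refine continuous_pi fun i => ?_
  fin_cases i <;> simp [symbol] <;> fun_prop

theorem contDiff_resX : ContDiff ℝ 1 (resX c a) := by
  refine contDiff_pi.2 fun i => ?_
  fin_cases i <;> simp [resX, symbol, kerX, pSymb, offDiag,
    Fin.sum_univ_five, vecHead, vecTail] <;> fun_prop

theorem contDiff_resY : ContDiff ℝ 1 (resY c a) := by
  refine contDiff_pi.2 fun i => ?_
  fin_cases i <;> simp [resY, symbol, kerY, pSymb, offDiag,
    Fin.sum_univ_five, vecHead, vecTail] <;> fun_prop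

theorem contDiff_system : ContDiff ℝ 1 (system c a) :=
  (contDiff_apply ℝ ℝ 0).prodMk ((contDiff_resX a).prodMk (contDiff_resY a))

theorem fderiv_system_apply (W v : Fin 11 → ℝ) :
    fderiv ℝ (system c a) W v = (v 0, fderiv ℝ (resX c a) W v, fderiv ℝ (resY c a) W v) := by
  have hX := (contDiff_resX (c := c) a).differentiable one_ne_zero W
  have hY := (contDiff_resY (c := c) a).differentiable one_ne_zero W
  change fderiv ℝ (fun w => (w 0, resX c a w, resY c a w)) W v = _
  rw [DifferentiableAt.fderiv_prodMk (differentiableAt_apply 0 W) (hX.prodMk hY),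
    DifferentiableAt.fderiv_prodMk hX hY]
  simp [fderiv_eval_apply]

variable {W v : Fin 11 → ℝ}

theorem fderiv_resX_apply (hW : W 0 = 0) (hv : v 0 = 0) :
    fderiv ℝ (resX c a) W v = ![v 1, 0, a 2 * v 5, W 3 * v 6 + W 6 * v 3, W 4 * v 7 + W 7 * v 4]
      + fun i => v 3 * c i 3 0 + v 4 * c i 4 0 := by
  ext i
  have hcoord := congrArg (· v)
    (fderiv_apply ((contDiff_resX (c := c) a).differentiable one_ne_zero W) i)
  simp only [ContinuousLinearMap.comp_apply, ContinuousLinearMap.proj_apply] at hcoord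
  rw [← hcoord]
  fin_cases i <;> simp [resX, symbol, kerX, pSymb, offDiag,
    Fin.sum_univ_five, vecHead, vecTail] <;>
    simp (disch := fun_prop) [fderiv_fun_mul, fderiv_fun_add, fderiv_eval_apply, hW, hv] <;> ring

theorem fderiv_resY_apply (hW : W 0 = 0) (hv : v 0 = 0) :
    fderiv ℝ (resY c a) W v = ![0, v 2, a 2 * v 8, W 3 * v 9 + W 9 * v 3, W 4 * v 10 + W 10 * v 4]
      + fun i => v 3 * c i 3 1 + v 4 * c i 4 1 := by
  ext i
  have hcoord := congrArg (· v)
    (fderiv_apply ((contDiff_resY (c := c) a).differentiable one_ne_zero W) i)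
  simp only [ContinuousLinearMap.comp_apply, ContinuousLinearMap.proj_apply] at hcoord
  rw [← hcoord]
  fin_cases i <;> simp [resY, symbol, kerY, pSymb, offDiag,
    Fin.sum_univ_five, vecHead, vecTail] <;>
    simp (disch := fun_prop) [fderiv_fun_mul, fderiv_fun_add, fderiv_eval_apply, hW, hv] <;> ring

theorem fderiv_system_injective (hW : W 0 = 0) (ha₂ : a 2 ≠ 0) (hW₃ : W 3 ≠ 0) (hW₄ : W 4 ≠ 0)
    (hC : c 0 3 1 * c 1 4 0 ≠ c 1 3 0 * c 0 4 1) : Injective (fderiv ℝ (system c a) W) := by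
  rw [injective_iff_map_eq_zero]
  intro v hv
  rw [fderiv_system_apply, Prod.mk_eq_zero, Prod.mk_eq_zero] at hv
  obtain ⟨hv₀, hX, hY⟩ := hv
  rw [fderiv_resX_apply a hW hv₀] at hX
  rw [fderiv_resY_apply a hW hv₀] at hY
  have x := congrFun hX
  have y := congrFun hY
  have hx₁ : v 3 * c 1 3 0 + v 4 * c 1 4 0 = 0 := by simpa using x 1
  have hy₀ : v 3 * c 0 3 1 + v 4 * c 0 4 1 = 0 := by simpa using y 0
  have hdet : c 0 3 1 * c 1 4 0 - c 1 3 0 * c 0 4 1 ≠ 0 := sub_ne_zero.2 hC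
  have h₃ : v 3 = 0 := by
    have : v 3 * (c 0 3 1 * c 1 4 0 - c 1 3 0 * c 0 4 1) = 0 := by
      linear_combination c 1 4 0 * hy₀ - c 0 4 1 * hx₁
    simpa [hdet] using this
  have h₄ : v 4 = 0 := by
    have : v 4 * (c 0 3 1 * c 1 4 0 - c 1 3 0 * c 0 4 1) = 0 := by
      linear_combination c 0 3 1 * hx₁ - c 1 3 0 * hy₀
    simpa [hdet] using this
  ext i
  fin_cases i
  · exact hv₀
  · simpa [h₃, h₄] using x 0
  · simpa [h₃, h₄] using y 1
  · exact h₃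
  · exact h₄
  · simpa [h₃, h₄, ha₂] using x 2
  · simpa [h₃, h₄, hW₃] using x 3
  · simpa [h₃, h₄, hW₄] using x 4
  · simpa [h₃, h₄, ha₂] using y 2
  · simpa [h₃, h₄, hW₃] using y 3
  · simpa [h₃, h₄, hW₄] using y 4

noncomputable def basePoint (S : Matrix (Fin 5) (Fin 5) ℝ) : Fin 11 → ℝ :=
  ![0, -S 0 0, -S 1 1, a 3, a 4, -S 2 0 / a 2, -S 3 0 / a 3, -S 4 0 / a 4,
    -S 2 1 / a 2, -S 3 1 / a 3, -S 4 1 / a 4]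

theorem symbol_basePoint (S : Matrix (Fin 5) (Fin 5) ℝ) (ha₀ : a 0 = 0) (ha₁ : a 1 = 0) :
    symbol a (basePoint a S) = a := by
  ext i
  fin_cases i <;> simp [symbol, basePoint, ha₀, ha₁]

theorem system_basePoint (ha₀ : a 0 = 0) (ha₁ : a 1 = 0) (ha₂ : a 2 ≠ 0) (ha₃ : a 3 ≠ 0)
    (ha₄ : a 4 ≠ 0) (h₀₁ : c 0 2 1 * a 2 + c 0 3 1 * a 3 + c 0 4 1 * a 4 = 0)
    (h₁₀ : c 1 2 0 * a 2 + c 1 3 0 * a 3 + c 1 4 0 * a 4 = 0) :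
    system c a (basePoint a (pSymb a (offDiag c))) = 0 := by
  have hS₀₁ : pSymb a (offDiag c) 0 1 = 0 := by
    simp only [pSymb, offDiag, of_apply, Fin.sum_univ_five, ha₀, ha₁]
    simp
    linear_combination h₀₁
  have hS₁₀ : pSymb a (offDiag c) 1 0 = 0 := by
    simp only [pSymb, offDiag, of_apply, Fin.sum_univ_five, ha₀, ha₁]
    simp
    linear_combination h₁₀
  have hsymbol := symbol_basePoint a (pSymb a (offDiag c)) ha₀ ha₁
  refine Prod.ext rfl (Prod.ext ?_ ?_) <;> simp only [system, resX, resY, hsymbol] <;> ext i <;>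
    fin_cases i <;> simp [kerX, kerY, basePoint, mulVec, dotProduct, Fin.sum_univ_five,
      mul_div_cancel₀, ha₂, ha₃, ha₄, hS₀₁, hS₁₀]

end SingularBranch

open SingularBranch

theorem stmt11_general (c : Fin 5 → Fin 5 → Fin 5 → ℝ) (hc : IsParamColl 5 c)
    (hC1 : ∀ k l : Fin 5, k ≠ l → k ≠ 0 → k ≠ 1 → l ≠ 0 → l ≠ 1 →
      c 0 k 1 * c 1 l 0 ≠ c 1 k 0 * c 0 l 1)
    (a : Fin 5 → ℝ)
    (ha0 : a 0 = 0) (ha1 : a 1 = 0)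
    (ha : a 2 * a 3 * a 4 ≠ 0)
    (heq1 : c 0 2 1 * a 2 + c 0 3 1 * a 3 + c 0 4 1 * a 4 = 0)
    (heq2 : c 1 2 0 * a 2 + c 1 3 0 * a 3 + c 1 4 0 * a 4 = 0) :
    ∃ T > (0 : ℝ), ∃ ξ : ℝ → (Fin 5 → ℝ),
      ContinuousOn ξ (Set.Ioo 0 T) ∧
      Filter.Tendsto ξ (nhdsWithin 0 (Set.Ioi 0)) (nhds a) ∧
      ∀ t ∈ Set.Ioo (0 : ℝ) T, ξ t ≠ 0 ∧ (pSymb (ξ t) (pScale t c)).rank ≤ 3 := by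
  obtain ⟨⟨ha₂, ha₃⟩, ha₄⟩ : (a 2 ≠ 0 ∧ a 3 ≠ 0) ∧ a 4 ≠ 0 := by
    simpa only [mul_ne_zero_iff] using ha
  set W := basePoint a (pSymb a (offDiag c))
  have hW : system c a W = 0 := system_basePoint a ha0 ha1 ha₂ ha₃ ha₄ heq1 heq2
  obtain ⟨L, hL⟩ := (contDiff_system a).contDiffAt.exists_hasStrictFDerivAt_equiv
    (fderiv_system_injective (W := W) a rfl ha₂ ha₃ ha₄
      (hC1 3 4 (by decide) (by decide) (by decide) (by decide) (by decide))) (by simp)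
  obtain ⟨γ, hγ₀, hγ⟩ := hL.exists_local_lift (x₀ := 0)
    (z := fun t : ℝ => ((t, 0, 0) : ℝ × (Fin 5 → ℝ) × (Fin 5 → ℝ))) (by fun_prop)
    (by rw [hW]; rfl)
  obtain ⟨T, hT, hγT⟩ := Metric.eventually_nhds_iff.1 hγ
  have hdist : ∀ t ∈ Set.Ioo 0 T, dist t 0 < T := fun t ht => by
    rw [Real.dist_0_eq_abs, abs_of_pos ht.1]
    exact ht.2
  have hξ := fun t (ht : dist t 0 < T) => (continuous_symbol a).continuousAt.comp (hγT ht).1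
  refine ⟨T, hT, fun t => symbol a (γ t), fun t ht => (hξ t (hdist t ht)).continuousWithinAt,
    ?_, fun t ht => ⟨fun h => ha₂ (congrFun h 2), ?_⟩⟩
  · have hlim := (hξ 0 (by simpa using hT)).tendsto
    rw [Function.comp_apply, hγ₀, symbol_basePoint a _ ha0 ha1] at hlim
    exact hlim.mono_left nhdsWithin_le_nhds
  · have hsys := (hγT (hdist t ht)).2
    simp only [system, Prod.mk.injEq] at hsys
    obtain ⟨ht₀, hX, hY⟩ := hsys
    simpa [ht₀] using rank_pSymb_le_three a hc hX hY

/-- The indices 1,…,5 of the paper correspond to `0,…,4 : Fin 5`, so the pair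
`(i,j) = (1,2)` is `(0,1)`. -/
theorem stmt11 (c : Fin 5 → Fin 5 → Fin 5 → ℝ) (hc : IsParamColl 5 c)
    (hC1 : ∀ k l : Fin 5, k ≠ l → k ≠ 0 → k ≠ 1 → l ≠ 0 → l ≠ 1 →
      c 0 k 1 * c 1 l 0 ≠ c 1 k 0 * c 0 l 1)
    (hC2 : ∀ p : Fin 5, p ≠ 0 → p ≠ 1 →
      ∀ k l m : Fin 5, k ≠ l → k ≠ m → l ≠ m →
        k ≠ 0 → k ≠ 1 → k ≠ p → l ≠ 0 → l ≠ 1 → l ≠ p → m ≠ 0 → m ≠ 1 → m ≠ p →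
        ∀ I : Fin 5, (I = 0 ∨ I = 1) →
          c p k I * (c 0 l 1 * c 1 m 0 - c 1 l 0 * c 0 m 1)
            + c p l I * (c 1 k 0 * c 0 m 1 - c 0 k 1 * c 1 m 0)
            + c p m I * (c 0 k 1 * c 1 l 0 - c 1 k 0 * c 0 l 1) ≠ 0)
    (a : Fin 5 → ℝ)
    (ha_unit : ∑ k, (a k) ^ 2 = 1)
    (ha0 : a 0 = 0) (ha1 : a 1 = 0)
    (ha : a 2 * a 3 * a 4 ≠ 0)
    (heq1 : c 0 2 1 * a 2 + c 0 3 1 * a 3 + c 0 4 1 * a 4 = 0)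
    (heq2 : c 1 2 0 * a 2 + c 1 3 0 * a 3 + c 1 4 0 * a 4 = 0) :
    ∃ T > (0 : ℝ), ∃ ξ : ℝ → (Fin 5 → ℝ),
      ContinuousOn ξ (Set.Ioo 0 T) ∧
      Filter.Tendsto ξ (nhdsWithin 0 (Set.Ioi 0)) (nhds a) ∧
      ∀ t ∈ Set.Ioo (0 : ℝ) T, ξ t ≠ 0 ∧ (pSymb (ξ t) (pScale t c)).rank ≤ 3 :=
  stmt11_general c hc hC1 a ha0 ha1 ha heq1 heq2
end

section
/- Let n = 5, fix a pair i ≠ j in {1,…,5}, and suppose the parameter collection c satisfies condition (C1): c_i^{kj} c_j^{li} ≠ c_j^{ki} c_i^{lj} for all k ≠ l with k,l ∉ {i,j}. Then the set W = {a ∈ ℝ^5 : a_i = a_j = 0, Σ_{k∉{i,j}} c_i^{kj} a_k = 0, Σ_{k∉{i,j}} c_j^{ki} a_k = 0} is a one-dimensional linear subspace of ℝ^5, and every nonzero a ∈ W satisfies a_k ≠ 0 for all k ∉ {i,j}. -/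
open Matrix Function Finset

section CrossProduct

theorem cross_apply_ne_zero {R : Type*} [CommRing R] {u v : Fin 3 → R}
    (h : ∀ a b, a ≠ b → u a * v b ≠ u b * v a) (m : Fin 3) : (u ⨯₃ v) m ≠ 0 := by
  rw [cross_apply]
  fin_cases m
  · simpa [sub_eq_zero] using h 1 2 (by decide)
  · simpa [sub_eq_zero] using h 2 0 (by decide)
  · simpa [sub_eq_zero] using h 0 1 (by decide)

variable {K : Type*} [Field K]

theorem mem_span_singleton_of_cross_eq_zero {a w : Fin 3 → K} (hw : w ≠ 0) (h : a ⨯₃ w = 0) :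
    a ∈ K ∙ w := by
  have hdep : ¬LinearIndependent K ![a, w] := by
    rw [← crossProduct_ne_zero_iff_linearIndependent, not_not]
    exact h
  rw [linearIndependent_fin2] at hdep
  push Not at hdep
  exact Submodule.mem_span_singleton.2 (hdep hw)

theorem setOf_dotProduct_eq_zero_eq_span_cross {p q : Fin 3 → K} (h : p ⨯₃ q ≠ 0) :
    {a | p ⬝ᵥ a = 0 ∧ q ⬝ᵥ a = 0} = (K ∙ p ⨯₃ q : Set (Fin 3 → K)) := by
  ext a
  constructor
  · rintro ⟨hp, hq⟩
    apply mem_span_singleton_of_cross_eq_zero h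
    rw [cross_cross_eq_smul_sub_smul', dotProduct_comm a q, hp, hq, zero_smul, zero_smul, sub_zero]
  · intro ha
    obtain ⟨t, rfl⟩ := Submodule.mem_span_singleton.1 ha
    simp [dotProduct_smul, dot_self_cross, dot_cross_self]

end CrossProduct

section Transport

variable {K ι : Type*} [Field K]

theorem extend_comp_eq_self {α : Type*} {e : α → ι} (he : Injective e) {a : ι → K}
    (ha : ∀ k ∉ Set.range e, a k = 0) : extend e (a ∘ e) 0 = a := by
  ext k
  by_cases hk : k ∈ Set.range e
  · obtain ⟨m, rfl⟩ := hk
    exact he.extend_apply _ _ m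
  · rw [extend_apply' _ _ _ hk, ha k hk, Pi.zero_apply]

theorem setOf_supported_dotProduct_eq_zero_eq_span (e : Fin 3 ↪ ι) (p q : ι → K)
    (h : (p ∘ e) ⨯₃ (q ∘ e) ≠ 0) :
    {a : ι → K | (∀ k ∉ univ.map e, a k = 0) ∧
        ∑ k ∈ univ.map e, p k * a k = 0 ∧ ∑ k ∈ univ.map e, q k * a k = 0} =
      (K ∙ extend e ((p ∘ e) ⨯₃ (q ∘ e)) 0 : Set (ι → K)) := by
  have hkernel := setOf_dotProduct_eq_zero_eq_span_cross h
  ext a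
  simp only [Set.mem_ofPred_eq, SetLike.mem_coe, Submodule.mem_span_singleton, sum_map,
    mem_map, mem_univ, true_and, not_exists]
  change _ ∧ (p ∘ e) ⬝ᵥ (a ∘ e) = 0 ∧ (q ∘ e) ⬝ᵥ (a ∘ e) = 0 ↔ _
  constructor
  · rintro ⟨hsupp, hdot⟩
    have : a ∘ e ∈ (K ∙ (p ∘ e) ⨯₃ (q ∘ e) : Set (Fin 3 → K)) := hkernel ▸ hdot
    obtain ⟨t, ht⟩ := Submodule.mem_span_singleton.1 this
    refine ⟨t, ?_⟩
    rw [← extend_comp_eq_self e.injective (a := a) (by simpa using hsupp), ← ht]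
    simpa using (extend_smul t e ((p ∘ e) ⨯₃ (q ∘ e)) 0).symm
  · rintro ⟨t, rfl⟩
    have hcomp : (t • extend e ((p ∘ e) ⨯₃ (q ∘ e)) 0) ∘ e = t • (p ∘ e) ⨯₃ (q ∘ e) := by
      ext m
      simp [e.injective.extend_apply]
    refine ⟨fun k hk => ?_, ?_⟩
    · rw [Pi.smul_apply, extend_apply' _ _ _ (not_exists.2 hk), Pi.zero_apply, smul_zero]
    · change (t • _) ∘ e ∈ {b | (p ∘ e) ⬝ᵥ b = 0 ∧ (q ∘ e) ⬝ᵥ b = 0}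
      rw [hcomp, hkernel]
      exact Submodule.smul_mem _ t (Submodule.mem_span_singleton_self _)

theorem apply_ne_zero_of_mem_span_extend {α : Type*} {e : α → ι} (he : Injective e)
    {w : α → K} (hw : ∀ m, w m ≠ 0) {a : ι → K} (ha : a ∈ K ∙ extend e w 0) (ha0 : a ≠ 0)
    (m : α) : a (e m) ≠ 0 := by
  obtain ⟨t, rfl⟩ := Submodule.mem_span_singleton.1 ha
  have ht : t ≠ 0 := by
    rintro rfl
    exact ha0 (zero_smul K _)
  rw [Pi.smul_apply, he.extend_apply, smul_eq_mul]
  exact mul_ne_zero ht (hw m)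

end Transport

theorem stmt12_general (c : Fin 5 → Fin 5 → Fin 5 → ℝ)
    (i j : Fin 5) (hij : i ≠ j)
    (hC1 : ∀ k l : Fin 5, k ≠ l → k ≠ i → k ≠ j → l ≠ i → l ≠ j →
      c i k j * c j l i ≠ c j k i * c i l j) :
    ∃ W : Submodule ℝ (Fin 5 → ℝ),
      (W : Set (Fin 5 → ℝ)) =
        {a : Fin 5 → ℝ | a i = 0 ∧ a j = 0 ∧
          (∑ k ∈ Finset.univ.filter (fun k => k ≠ i ∧ k ≠ j), c i k j * a k = 0) ∧
          (∑ k ∈ Finset.univ.filter (fun k => k ≠ i ∧ k ≠ j), c j k i * a k = 0)} ∧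
      Module.finrank ℝ W = 1 ∧
      ∀ a ∈ W, a ≠ (0 : Fin 5 → ℝ) → ∀ k : Fin 5, k ≠ i → k ≠ j → a k ≠ 0 := by
  set s := univ.filter (fun k : Fin 5 => k ≠ i ∧ k ≠ j)
  have hs_compl : s = {i, j}ᶜ := by
    ext k
    simp [s]
  have hcard : s.card = 3 := by
    rw [hs_compl, card_compl, card_pair hij, Fintype.card_fin]
  set e := (s.orderEmbOfFin hcard).toEmbedding
  have hes : univ.map e = s := map_orderEmbOfFin_univ s hcard
  have hes_mem : ∀ m, e m ≠ i ∧ e m ≠ j := fun m =>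
    (mem_filter.1 (s.orderEmbOfFin_mem hcard m)).2
  set w := ((fun k => c i k j) ∘ e) ⨯₃ ((fun k => c j k i) ∘ e)
  have hw : ∀ m, w m ≠ 0 := cross_apply_ne_zero fun m l hml => by
    change c i (e m) j * c j (e l) i ≠ c i (e l) j * c j (e m) i
    rw [mul_comm (c i (e l) j)]
    exact hC1 _ _ (e.injective.ne hml) (hes_mem m).1 (hes_mem m).2 (hes_mem l).1 (hes_mem l).2
  refine ⟨ℝ ∙ extend e w 0, ?_, finrank_span_singleton fun h0 => hw 0 ?_, ?_⟩
  · rw [← setOf_supported_dotProduct_eq_zero_eq_span e _ _ fun h0 => hw 0 (congrFun h0 0), hes]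
    ext a
    simp only [Set.mem_ofPred_eq, hs_compl, mem_compl, not_not, mem_insert, mem_singleton,
      forall_eq_or_imp, forall_eq, and_assoc]
  · simpa [e.injective.extend_apply] using congrFun h0 (e 0)
  · intro a ha ha0 k hki hkj
    obtain ⟨m, -, rfl⟩ := mem_map.1 (hes ▸ mem_filter.2 ⟨mem_univ k, hki, hkj⟩ : k ∈ univ.map e)
    exact apply_ne_zero_of_mem_span_extend e.injective hw ha ha0 m

theorem stmt12 (c : Fin 5 → Fin 5 → Fin 5 → ℝ) (hc : IsParamColl 5 c)
    (i j : Fin 5) (hij : i ≠ j)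
    (hC1 : ∀ k l : Fin 5, k ≠ l → k ≠ i → k ≠ j → l ≠ i → l ≠ j →
      c i k j * c j l i ≠ c j k i * c i l j) :
    ∃ W : Submodule ℝ (Fin 5 → ℝ),
      (W : Set (Fin 5 → ℝ)) =
        {a : Fin 5 → ℝ | a i = 0 ∧ a j = 0 ∧
          (∑ k ∈ Finset.univ.filter (fun k => k ≠ i ∧ k ≠ j), c i k j * a k = 0) ∧
          (∑ k ∈ Finset.univ.filter (fun k => k ≠ i ∧ k ≠ j), c j k i * a k = 0)} ∧
      Module.finrank ℝ W = 1 ∧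
      ∀ a ∈ W, a ≠ (0 : Fin 5 → ℝ) → ∀ k : Fin 5, k ≠ i → k ≠ j → a k ≠ 0 :=
  stmt12_general c i j hij hC1
end

section
/- With the notation of the immersion setup, let f_ij = f_ji be given smooth functions on Ω. Then the following two statements are equivalent: (i) ∂_i u · ∂_j v + ∂_j u · ∂_i v = f_ij on Ω for all 1 ≤ i,j ≤ n; (ii) ∂_j v_i + ∂_i v_j − 2 Σ_{k=1}^n Γ_ij^k v_k − 2 Σ_{μ=1}^{n(n−1)/2} H_ij^μ v^{n+μ} = f_ij on Ω for all 1 ≤ i,j ≤ n. -/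
noncomputable section

/-- First partial derivative `∂_k f (x)`. -/
def pder {n : ℕ} (f : (Fin n → ℝ) → ℝ) (k : Fin n) (x : Fin n → ℝ) : ℝ :=
  fderiv ℝ f x (Pi.single k 1)

/-- Euclidean dot product on `Fin N → ℝ`. -/
def dotN {N : ℕ} (a b : Fin N → ℝ) : ℝ := ∑ m, a m * b m

/-- The tangent vector `∂_i u (x)`. -/
def du {n N : ℕ} (u : (Fin n → ℝ) → Fin N → ℝ) (i : Fin n) (x : Fin n → ℝ) :
    Fin N → ℝ :=
  fun m => pder (fun y => u y m) i x

/-- The induced metric `p_ij = ∂_i u · ∂_j u`. -/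
def imet {n N : ℕ} (u : (Fin n → ℝ) → Fin N → ℝ) (i j : Fin n)
    (x : Fin n → ℝ) : ℝ :=
  dotN (du u i x) (du u j x)

/-- The inverse `(p^{ij})` of the induced metric. -/
def imetInv {n N : ℕ} (u : (Fin n → ℝ) → Fin N → ℝ) (x : Fin n → ℝ) :
    Matrix (Fin n) (Fin n) ℝ :=
  (Matrix.of fun i j => imet u i j x)⁻¹

/-- The Christoffel symbols
`Γ_ij^k = ½ Σ_l p^{kl}(∂_i p_lj + ∂_j p_li − ∂_l p_ij)`. -/
def christ {n N : ℕ} (u : (Fin n → ℝ) → Fin N → ℝ) (i j k : Fin n)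
    (x : Fin n → ℝ) : ℝ :=
  (1 / 2) * ∑ l, imetInv u x k l *
    (pder (imet u l j) i x + pder (imet u l i) j x - pder (imet u i j) l x)

/-- The second fundamental form `H_ij = ∂_i∂_j u − Σ_k Γ_ij^k ∂_k u`. -/
def sff {n N : ℕ} (u : (Fin n → ℝ) → Fin N → ℝ) (i j : Fin n)
    (x : Fin n → ℝ) : Fin N → ℝ :=
  fun m => pder (fun y => du u j y m) i x - ∑ k, christ u i j k x * du u k x m

/-- The components `H_ij^μ = H_ij · N_μ`. -/
def sffc {n N M : ℕ} (u : (Fin n → ℝ) → Fin N → ℝ)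
    (Nv : Fin M → (Fin n → ℝ) → Fin N → ℝ) (i j : Fin n) (μ : Fin M)
    (x : Fin n → ℝ) : ℝ :=
  dotN (sff u i j x) (Nv μ x)

/-- The vector field `v = Σ_k v^k ∂_k u + Σ_μ v^{n+μ} N_μ`. -/
def vfield {n N M : ℕ} (u : (Fin n → ℝ) → Fin N → ℝ)
    (Nv : Fin M → (Fin n → ℝ) → Fin N → ℝ)
    (vt : Fin n → (Fin n → ℝ) → ℝ) (vn : Fin M → (Fin n → ℝ) → ℝ)
    (x : Fin n → ℝ) : Fin N → ℝ :=
  fun m => (∑ k, vt k x * du u k x m) + ∑ μ, vn μ x * Nv μ x m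

/-- The lowered tangential components `v_i = Σ_k p_ik v^k`. -/
def vlow {n N : ℕ} (u : (Fin n → ℝ) → Fin N → ℝ)
    (vt : Fin n → (Fin n → ℝ) → ℝ) (i : Fin n) (x : Fin n → ℝ) : ℝ :=
  ∑ k, imet u i k x * vt k x



open scoped Topology

lemma pder_congr' {n : ℕ} {f g : (Fin n → ℝ) → ℝ} {k : Fin n} {x : Fin n → ℝ}
    (h : f =ᶠ[nhds x] g) : pder f k x = pder g k x := by
  unfold pder; rw [h.fderiv_eq]

lemma pder_mul' {n : ℕ} {f g : (Fin n → ℝ) → ℝ} {k : Fin n} {x : Fin n → ℝ}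
    (hf : DifferentiableAt ℝ f x) (hg : DifferentiableAt ℝ g x) :
    pder (fun y => f y * g y) k x = pder f k x * g x + f x * pder g k x := by
  unfold pder; rw [fderiv_fun_mul hf hg]; simp; ring

lemma pder_sum' {n : ℕ} {ι : Type*} (s : Finset ι) {f : ι → (Fin n → ℝ) → ℝ} {k : Fin n}
    {x : Fin n → ℝ} (hf : ∀ i ∈ s, DifferentiableAt ℝ (f i) x) :
    pder (fun y => ∑ i ∈ s, f i y) k x = ∑ i ∈ s, pder (f i) k x := by
  unfold pder; rw [fderiv_fun_sum hf]; simp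

lemma contDiffAt_pder' {n : ℕ} {f : (Fin n → ℝ) → ℝ} {x : Fin n → ℝ}
    (hf : ContDiffAt ℝ (⊤ : ℕ∞) f x) (k : Fin n) :
    ContDiffAt ℝ (⊤ : ℕ∞) (fun y => pder f k y) x := by
  have h1 : ContDiffAt ℝ (⊤ : ℕ∞) (fderiv ℝ f) x := hf.fderiv_right (by simp)
  exact (ContinuousLinearMap.apply ℝ ℝ (Pi.single k 1)).contDiff.comp_contDiffAt x h1

lemma pder_pder_comm' {n : ℕ} {f : (Fin n → ℝ) → ℝ} {x : Fin n → ℝ}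
    (hf : ContDiffAt ℝ (⊤ : ℕ∞) f x) (i j : Fin n) :
    pder (fun y => pder f i y) j x = pder (fun y => pder f j y) i x := by
  have hs : IsSymmSndFDerivAt ℝ f x := hf.isSymmSndFDerivAt (by rw [minSmoothness_of_isRCLikeNormedField]; exact WithTop.coe_le_coe.mpr (le_top : (2:ℕ∞) ≤ ⊤))
  have hd : DifferentiableAt ℝ (fderiv ℝ f) x :=
    (hf.fderiv_right (m := 1) (by exact WithTop.coe_le_coe.mpr le_top)).differentiableAt one_ne_zero
  have key : ∀ v w : Fin n → ℝ,
      fderiv ℝ (fun y => fderiv ℝ f y v) x w = fderiv ℝ (fderiv ℝ f) x w v := by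
    intro v w
    rw [fderiv_clm_apply hd (differentiableAt_const v)]
    simp
  unfold pder
  rw [key, key, hs]

lemma dotN_comm' {N : ℕ} (a b : Fin N → ℝ) : dotN a b = dotN b a := by
  unfold dotN; exact Finset.sum_congr rfl fun m _ => mul_comm _ _

lemma dotN_add_right' {N : ℕ} (a b c : Fin N → ℝ) :
    dotN a (fun m => b m + c m) = dotN a b + dotN a c := by
  unfold dotN; rw [← Finset.sum_add_distrib]
  exact Finset.sum_congr rfl fun m _ => by ring

lemma dotN_sum_right' {N : ℕ} {ι : Type*} (s : Finset ι) (a : Fin N → ℝ)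
    (c : ι → ℝ) (b : ι → Fin N → ℝ) :
    dotN a (fun m => ∑ k ∈ s, c k * b k m) = ∑ k ∈ s, c k * dotN a (b k) := by
  unfold dotN
  simp only [Finset.mul_sum]
  rw [Finset.sum_comm]
  exact Finset.sum_congr rfl fun k _ => Finset.sum_congr rfl fun m _ => by ring

lemma pder_dotN' {n N : ℕ} {F G : (Fin n → ℝ) → Fin N → ℝ} {k : Fin n} {x : Fin n → ℝ}
    (hF : ∀ m, DifferentiableAt ℝ (fun y => F y m) x)
    (hG : ∀ m, DifferentiableAt ℝ (fun y => G y m) x) :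
    pder (fun y => dotN (F y) (G y)) k x
      = dotN (fun m => pder (fun y => F y m) k x) (G x)
        + dotN (F x) (fun m => pder (fun y => G y m) k x) := by
  unfold dotN
  rw [pder_sum' _ (f := fun m y => F y m * G y m) (fun m _ => (hF m).mul (hG m)), ← Finset.sum_add_distrib]
  exact Finset.sum_congr rfl fun m _ => pder_mul' (hF m) (hG m)

lemma gram_isUnit' {n N : ℕ} {w : Fin n → Fin N → ℝ} (h : LinearIndependent ℝ w) :
    IsUnit (Matrix.of fun a b => dotN (w a) (w b) : Matrix (Fin n) (Fin n) ℝ) := by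
  rw [← Matrix.mulVec_injective_iff_isUnit]
  have ker : ∀ c : Fin n → ℝ,
      (Matrix.of fun a b => dotN (w a) (w b)).mulVec c = 0 → c = 0 := by
    intro c hc
    set z : Fin N → ℝ := fun m => ∑ b, c b * w b m with hzdef
    have hz : ∀ a, dotN (w a) z = 0 := by
      intro a
      have h1 := congrFun hc a
      rw [hzdef, dotN_sum_right']
      rw [Matrix.mulVec, dotProduct] at h1
      simp only [Matrix.of_apply, Pi.zero_apply] at h1
      rw [← h1]
      exact Finset.sum_congr rfl fun b _ => by ring
    have hz2 : dotN z z = 0 := by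
      nth_rewrite 2 [hzdef]
      rw [dotN_sum_right']
      exact Finset.sum_eq_zero fun b _ => by rw [dotN_comm', hz b, mul_zero]
    have hzm : ∀ m, z m = 0 := by
      intro m
      have h0 := (Finset.sum_eq_zero_iff_of_nonneg
        (fun m _ => mul_self_nonneg (z m))).mp hz2 m (Finset.mem_univ m)
      exact mul_self_eq_zero.mp h0
    have hall : ∀ b, c b = 0 := by
      apply Fintype.linearIndependent_iff.mp h
      funext m
      simpa using hzm m
    funext b; exact hall b
  intro c1 c2 h12
  have h0 := ker (c1 - c2) (by rw [Matrix.mulVec_sub, h12, sub_self])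
  exact sub_eq_zero.mp h0

theorem stmt17 (n : ℕ) (hn : 2 ≤ n)
    (Ω : Set (Fin n → ℝ)) (hΩ : IsOpen Ω)
    (u : (Fin n → ℝ) → Fin (n * (n + 1) / 2) → ℝ)
    (hu : ∀ m, ContDiffOn ℝ (⊤ : ℕ∞) (fun x => u x m) Ω)
    (hind : ∀ x ∈ Ω, LinearIndependent ℝ (fun i : Fin n => du u i x))
    (Nv : Fin (n * (n - 1) / 2) → (Fin n → ℝ) → Fin (n * (n + 1) / 2) → ℝ)
    (hNs : ∀ μ m, ContDiffOn ℝ (⊤ : ℕ∞) (fun x => Nv μ x m) Ω)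
    (hNorth : ∀ x ∈ Ω, ∀ μ, ∀ i : Fin n, dotN (Nv μ x) (du u i x) = 0)
    (hNind : ∀ x ∈ Ω, LinearIndependent ℝ (fun μ => Nv μ x))
    (hNspan : ∀ x ∈ Ω, ∀ w : Fin (n * (n + 1) / 2) → ℝ,
      (∀ i : Fin n, dotN w (du u i x) = 0) →
      w ∈ Submodule.span ℝ (Set.range fun μ => Nv μ x))
    (vt : Fin n → (Fin n → ℝ) → ℝ) (hvt : ∀ k, ContDiffOn ℝ (⊤ : ℕ∞) (vt k) Ω)
    (vn : Fin (n * (n - 1) / 2) → (Fin n → ℝ) → ℝ)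
    (hvn : ∀ μ, ContDiffOn ℝ (⊤ : ℕ∞) (vn μ) Ω)
    (f : Fin n → Fin n → (Fin n → ℝ) → ℝ)
    (hf_smooth : ∀ i j, ContDiffOn ℝ (⊤ : ℕ∞) (f i j) Ω)
    (hf_symm : ∀ i j, f i j = f j i) :
    (∀ i j : Fin n, ∀ x ∈ Ω,
        dotN (du u i x) (fun m => pder (fun y => vfield u Nv vt vn y m) j x)
          + dotN (du u j x) (fun m => pder (fun y => vfield u Nv vt vn y m) i x)
          = f i j x) ↔
    (∀ i j : Fin n, ∀ x ∈ Ω,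
        pder (vlow u vt i) j x + pder (vlow u vt j) i x
          - 2 * (∑ k, christ u i j k x * vlow u vt k x)
          - 2 * (∑ μ, sffc u Nv i j μ x * vn μ x)
          = f i j x) := by
  have key : ∀ i j : Fin n, ∀ x ∈ Ω,
      dotN (du u i x) (fun m => pder (fun y => vfield u Nv vt vn y m) j x)
        + dotN (du u j x) (fun m => pder (fun y => vfield u Nv vt vn y m) i x)
      = pder (vlow u vt i) j x + pder (vlow u vt j) i x
        - 2 * (∑ k, christ u i j k x * vlow u vt k x)
        - 2 * (∑ μ, sffc u Nv i j μ x * vn μ x) := by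
    intro i j x hx
    have hnx : Ω ∈ nhds x := hΩ.mem_nhds hx
    have hucd : ∀ m, ContDiffAt ℝ (⊤ : ℕ∞) (fun z => u z m) x := fun m => (hu m).contDiffAt hnx
    have hdu_d : ∀ (a : Fin n) m, ∀ y ∈ Ω, DifferentiableAt ℝ (fun z => du u a z m) y := by
      intro a m y hy
      exact (contDiffAt_pder' ((hu m).contDiffAt (hΩ.mem_nhds hy)) a).differentiableAt (by simp)
    have hvf_d : ∀ m, ∀ y ∈ Ω, DifferentiableAt ℝ (fun z => vfield u Nv vt vn z m) y := by
      intro m y hy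
      have h1 : DifferentiableAt ℝ (fun z => ∑ k, vt k z * du u k z m) y :=
        DifferentiableAt.fun_sum fun k _ =>
          (((hvt k).contDiffAt (hΩ.mem_nhds hy)).differentiableAt (by simp)).mul (hdu_d k m y hy)
      have h2 : DifferentiableAt ℝ (fun z => ∑ μ, vn μ z * Nv μ z m) y :=
        DifferentiableAt.fun_sum fun μ _ =>
          (((hvn μ).contDiffAt (hΩ.mem_nhds hy)).differentiableAt (by simp)).mul
            (((hNs μ m).contDiffAt (hΩ.mem_nhds hy)).differentiableAt (by simp))
      exact h1.add h2
    have Dsymm : ∀ a b m, pder (fun y => du u b y m) a x = pder (fun y => du u a y m) b x :=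
      fun a b m => pder_pder_comm' (hucd m) b a
    have himet_pder : ∀ a b c : Fin n,
        pder (imet u b c) a x
          = dotN (fun m => pder (fun y => du u b y m) a x) (du u c x)
            + dotN (du u b x) (fun m => pder (fun y => du u c y m) a x) := by
      intro a b c
      exact pder_dotN' (fun m => hdu_d b m x hx) (fun m => hdu_d c m x hx)
    have hc : ∀ l : Fin n,
        pder (imet u l j) i x + pder (imet u l i) j x - pder (imet u i j) l x
          = 2 * dotN (du u l x) (fun m => pder (fun y => du u j y m) i x) := by
      intro l
      rw [himet_pder i l j, himet_pder j l i, himet_pder l i j]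
      rw [show (fun m => pder (fun y => du u l y m) i x)
            = (fun m => pder (fun y => du u i y m) l x) from funext fun m => Dsymm i l m]
      rw [show (fun m => pder (fun y => du u i y m) j x)
            = (fun m => pder (fun y => du u j y m) i x) from funext fun m => Dsymm j i m]
      rw [show (fun m => pder (fun y => du u j y m) l x)
            = (fun m => pder (fun y => du u l y m) j x) from funext fun m => Dsymm l j m]
      rw [dotN_comm' (du u i x) (fun m => pder (fun y => du u l y m) j x)]
      ring
    have hPunit : IsUnit (Matrix.of fun a b => imet u a b x : Matrix (Fin n) (Fin n) ℝ) :=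
      gram_isUnit' (hind x hx)
    have hPP : (Matrix.of fun a b => imet u a b x) * imetInv u x = 1 :=
      Matrix.mul_nonsing_inv _ ((Matrix.isUnit_iff_isUnit_det _).mp hPunit)
    have hdelta : ∀ k m' : Fin n,
        (∑ l, imet u k l x * imetInv u x l m') = if k = m' then (1:ℝ) else 0 := by
      intro k m'
      have h1 := (Matrix.ext_iff.2 hPP) k m'
      rw [Matrix.mul_apply] at h1
      simpa [Matrix.one_apply] using h1
    have hcontr : ∀ k : Fin n,
        (∑ l, imet u k l x * christ u i j l x)
          = dotN (du u k x) (fun m => pder (fun y => du u j y m) i x) := by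
      intro k
      have e1 : (∑ l, imet u k l x * christ u i j l x)
          = ∑ l, ∑ m', imet u k l x * imetInv u x l m'
              * ((1/2) * (pder (imet u m' j) i x + pder (imet u m' i) j x
                  - pder (imet u i j) m' x)) := by
        refine Finset.sum_congr rfl fun l _ => ?_
        unfold christ
        rw [Finset.mul_sum, Finset.mul_sum]
        exact Finset.sum_congr rfl fun m' _ => by ring
      rw [e1, Finset.sum_comm]
      have e2 : ∀ m' : Fin n, (∑ l, imet u k l x * imetInv u x l m'
              * ((1/2) * (pder (imet u m' j) i x + pder (imet u m' i) j x
                  - pder (imet u i j) m' x)))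
          = (if k = m' then (1:ℝ) else 0) * ((1/2) * (pder (imet u m' j) i x
              + pder (imet u m' i) j x - pder (imet u i j) m' x)) := by
        intro m'
        rw [← Finset.sum_mul, hdelta k m']
      rw [Finset.sum_congr rfl fun m' _ => e2 m']
      simp only [ite_mul, one_mul, zero_mul, Finset.sum_ite_eq, Finset.mem_univ, if_true]
      have hck := hc k
      linarith
    have hB : ∀ μ, sffc u Nv i j μ x
        = dotN (fun m => pder (fun y => du u j y m) i x) (Nv μ x) := by
      intro μ
      have hsub : dotN (sff u i j x) (Nv μ x)
          = dotN (fun m => pder (fun y => du u j y m) i x) (Nv μ x)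
            - dotN (fun m => ∑ k, christ u i j k x * du u k x m) (Nv μ x) := by
        unfold dotN sff
        rw [← Finset.sum_sub_distrib]
        exact Finset.sum_congr rfl fun m _ => by ring
      unfold sffc
      rw [hsub, dotN_comm' (fun m => ∑ k, christ u i j k x * du u k x m) (Nv μ x),
        dotN_sum_right']
      have hz : ∀ k : Fin n, dotN (Nv μ x) (du u k x) = 0 := hNorth x hx μ
      simp [hz]
    have hsplit : ∀ (y : Fin n → ℝ) (w : Fin (n*(n+1)/2) → ℝ),
        dotN w (vfield u Nv vt vn y)
          = (∑ k, vt k y * dotN w (du u k y)) + ∑ μ, vn μ y * dotN w (Nv μ y) := by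
      intro y w
      have hv : vfield u Nv vt vn y
          = fun m => (∑ k, vt k y * du u k y m) + ∑ μ, vn μ y * Nv μ y m := rfl
      rw [hv, dotN_add_right' w, dotN_sum_right', dotN_sum_right']
    have hveq : ∀ a : Fin n,
        (fun y => dotN (du u a y) (vfield u Nv vt vn y)) =ᶠ[nhds x] vlow u vt a := by
      intro a
      filter_upwards [hnx] with y hy
      rw [hsplit y (du u a y)]
      have h2 : ∀ μ, dotN (du u a y) (Nv μ y) = 0 := fun μ => by
        rw [dotN_comm']; exact hNorth y hy μ a
      simp only [h2, mul_zero, Finset.sum_const_zero, add_zero]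
      unfold vlow
      exact Finset.sum_congr rfl fun k _ => mul_comm _ _
    have hmain : ∀ a b : Fin n,
        dotN (du u a x) (fun m => pder (fun y => vfield u Nv vt vn y m) b x)
          = pder (vlow u vt a) b x
            - dotN (fun m => pder (fun y => du u a y m) b x) (vfield u Nv vt vn x) := by
      intro a b
      have h1 : pder (fun y => dotN (du u a y) (vfield u Nv vt vn y)) b x
          = dotN (fun m => pder (fun y => du u a y m) b x) (vfield u Nv vt vn x)
            + dotN (du u a x) (fun m => pder (fun y => vfield u Nv vt vn y m) b x) :=
        pder_dotN' (fun m => hdu_d a m x hx) (fun m => hvf_d m x hx)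
      have h2 : pder (fun y => dotN (du u a y) (vfield u Nv vt vn y)) b x
          = pder (vlow u vt a) b x := pder_congr' (hveq a)
      linarith
    have hDv : dotN (fun m => pder (fun y => du u j y m) i x) (vfield u Nv vt vn x)
        = (∑ k, christ u i j k x * vlow u vt k x) + ∑ μ, sffc u Nv i j μ x * vn μ x := by
      rw [hsplit x]
      congr 1
      · calc (∑ k, vt k x * dotN (fun m => pder (fun y => du u j y m) i x) (du u k x))
            = ∑ k, vt k x * (∑ l, imet u k l x * christ u i j l x) := by
              refine Finset.sum_congr rfl fun k _ => ?_
              rw [dotN_comm' (fun m => pder (fun y => du u j y m) i x) (du u k x), hcontr k]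
          _ = ∑ l, christ u i j l x * vlow u vt l x := by
              simp only [Finset.mul_sum]
              rw [Finset.sum_comm]
              refine Finset.sum_congr rfl fun l _ => ?_
              unfold vlow
              rw [Finset.mul_sum]
              refine Finset.sum_congr rfl fun k _ => ?_
              rw [show imet u k l x = imet u l k x from dotN_comm' _ _]
              ring
      · exact Finset.sum_congr rfl fun μ _ => by rw [hB μ]; ring
    rw [hmain i j, hmain j i]
    rw [show (fun m => pder (fun y => du u i y m) j x)
          = (fun m => pder (fun y => du u j y m) i x) from funext fun m => Dsymm j i m]
    rw [hDv]
    ring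
  constructor <;> intro h i j x hx
  · rw [← key i j x hx]; exact h i j x hx
  · rw [key i j x hx]; exact h i j x hx
end
end
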